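/- arXiv:1503.00671 — 4 statements merged into one kernel-verified Lean document; each statement's English description precedes it below -/
import Mathlib

section
/- For every θ ∈ ℝ one has ∇w(cos θ, sin θ) = ( −cos θ (1 + 2 sin²θ)/√2 , sin θ (1 + 2 cos²θ)/√2 ). Moreover the function θ ↦ −cos θ (1 + 2 sin²θ)/√2 is strictly increasing on [π/4, 3π/4], taking the value −1 at θ = π/4 and 1 at θ = 3π/4; consequently Γ₁ is the graph of a unique continuous function φ : [−1,1] → ℝ, and φ is smooth on (−1,1). -/
open Real Set Metric Filter
open scoped RealInnerProductSpace Topology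

set_option maxHeartbeats 1000000

noncomputable section

/-- `w(x₁,x₂) = (x₂² − x₁²)/√(2(x₁²+x₂²))` (with value `0` at the origin, by `0`-division). -/
def w2 : EuclideanSpace ℝ (Fin 2) → ℝ :=
  fun x => ((x 1) ^ 2 - (x 0) ^ 2) / Real.sqrt (2 * ((x 0) ^ 2 + (x 1) ^ 2))

/-- `Γ = ∇w(S¹)`. -/
def Ga : Set (EuclideanSpace ℝ (Fin 2)) :=
  {p | ∃ x : EuclideanSpace ℝ (Fin 2), ‖x‖ = 1 ∧ gradient w2 x = p}

/-- `Γ₁ = Γ ∩ {p₂ ≥ |p₁|}`. -/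
def Ga1 : Set (EuclideanSpace ℝ (Fin 2)) :=
  Ga ∩ {p | |p 0| ≤ p 1}

/-- A point of the plane, as an element of `EuclideanSpace ℝ (Fin 2)`. -/
def pt (a b : ℝ) : EuclideanSpace ℝ (Fin 2) :=
  (WithLp.equiv 2 (Fin 2 → ℝ)).symm ![a, b]

/-! ### Auxiliary lemmas -/

theorem pt_zero (a b : ℝ) : pt a b 0 = a := rfl
theorem pt_one (a b : ℝ) : pt a b 1 = b := rfl

theorem pt_eta (p : EuclideanSpace ℝ (Fin 2)) : pt (p 0) (p 1) = p := by
  ext i; fin_cases i <;> rfl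

theorem norm_pt (c s : ℝ) (h : c^2 + s^2 = 1) : ‖pt c s‖ = 1 := by
  rw [EuclideanSpace.norm_eq]
  simp [pt, Fin.sum_univ_two]
  rw [show c^2+s^2 = 1 from h]

theorem sq_norm (x : EuclideanSpace ℝ (Fin 2)) (h : ‖x‖ = 1) : (x 0)^2 + (x 1)^2 = 1 := by
  have := EuclideanSpace.norm_eq x
  rw [h, Fin.sum_univ_two] at this
  simp only [Real.norm_eq_abs, sq_abs] at this
  have h2 : Real.sqrt ((x 0)^2 + (x 1)^2) = 1 := this.symm
  nlinarith [Real.sq_sqrt (show (0:ℝ) ≤ (x 0)^2 + (x 1)^2 by positivity), h2]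

theorem hasGrad (c s : ℝ) (h : c^2 + s^2 = 1) :
    HasGradientAt w2 (pt (-c*(1+2*s^2)/Real.sqrt 2) (s*(1+2*c^2)/Real.sqrt 2)) (pt c s) := by
  have h2 : Real.sqrt 2 ≠ 0 := by positivity
  have hsq : Real.sqrt 2 * Real.sqrt 2 = 2 := Real.mul_self_sqrt (by norm_num)
  set q : EuclideanSpace ℝ (Fin 2) := pt c s with hq
  set π0 : EuclideanSpace ℝ (Fin 2) →L[ℝ] ℝ := PiLp.proj 2 (fun _ : Fin 2 => ℝ) (0 : Fin 2) with hπ0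
  set π1 : EuclideanSpace ℝ (Fin 2) →L[ℝ] ℝ := PiLp.proj 2 (fun _ : Fin 2 => ℝ) (1 : Fin 2) with hπ1
  have h0 : HasFDerivAt (fun x : EuclideanSpace ℝ (Fin 2) => x 0) π0 q :=
    PiLp.hasFDerivAt_apply (𝕜 := ℝ) 2 q 0
  have h1 : HasFDerivAt (fun x : EuclideanSpace ℝ (Fin 2) => x 1) π1 q :=
    PiLp.hasFDerivAt_apply (𝕜 := ℝ) 2 q 1
  have hq0 : q 0 = c := rfl
  have hq1 : q 1 = s := rfl
  have hN : HasFDerivAt (fun x : EuclideanSpace ℝ (Fin 2) => x 1 * x 1 - x 0 * x 0)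
      ((s • π1 + s • π1) - (c • π0 + c • π0)) q := by
    have := (h1.mul h1).sub (h0.mul h0)
    rw [hq0, hq1] at this
    exact this
  have hn : HasFDerivAt (fun x : EuclideanSpace ℝ (Fin 2) => 2 * (x 0 * x 0 + x 1 * x 1))
      ((2:ℝ) • ((c • π0 + c • π0) + (s • π1 + s • π1))) q := by
    have := ((h0.mul h0).add (h1.mul h1)).const_mul (2:ℝ)
    rw [hq0, hq1] at this
    exact this
  have hval : 2 * (q 0 * q 0 + q 1 * q 1) = 2 := by
    rw [hq0, hq1]; nlinarith
  have hD : HasFDerivAt (fun x : EuclideanSpace ℝ (Fin 2) => Real.sqrt (2 * (x 0 * x 0 + x 1 * x 1)))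
      ((1 / (2 * Real.sqrt 2)) • ((2:ℝ) • ((c • π0 + c • π0) + (s • π1 + s • π1)))) q := by
    have hs : HasDerivAt Real.sqrt (1 / (2 * Real.sqrt (2 * (q 0 * q 0 + q 1 * q 1))))
        (2 * (q 0 * q 0 + q 1 * q 1)) := Real.hasDerivAt_sqrt (by rw [hval]; norm_num)
    have := hs.comp_hasFDerivAt q hn
    rw [hval] at this
    exact this
  have hDval : Real.sqrt (2 * (q 0 * q 0 + q 1 * q 1)) ≠ 0 := by rw [hval]; positivity
  have hInv : HasFDerivAt (fun x : EuclideanSpace ℝ (Fin 2) => (Real.sqrt (2 * (x 0 * x 0 + x 1 * x 1)))⁻¹)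
      ((-(2:ℝ)⁻¹) • ((1 / (2 * Real.sqrt 2)) • ((2:ℝ) • ((c • π0 + c • π0) + (s • π1 + s • π1))))) q := by
    have hi : HasDerivAt (fun y : ℝ => y⁻¹) (-((Real.sqrt (2 * (q 0 * q 0 + q 1 * q 1)))^2)⁻¹)
        (Real.sqrt (2 * (q 0 * q 0 + q 1 * q 1))) := hasDerivAt_inv hDval
    have := hi.comp_hasFDerivAt q hD
    rw [hval] at this
    rw [show (Real.sqrt 2 ^ 2 : ℝ) = 2 by rw [pow_two, hsq]] at this
    exact this
  have hdiv := hN.mul hInv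
  rw [hasGradientAt_iff_hasFDerivAt]
  have hNval : q 1 * q 1 - q 0 * q 0 = s^2 - c^2 := by rw [hq0, hq1]; ring
  have hw0 : w2 = fun x : EuclideanSpace ℝ (Fin 2) =>
      (x 1 * x 1 - x 0 * x 0) * (Real.sqrt (2 * (x 0 * x 0 + x 1 * x 1)))⁻¹ := by
    funext x; simp [w2, pow_two, div_eq_mul_inv]
  rw [hw0]
  convert hdiv using 1
  case e'_9 => rfl
  case e'_11 => rfl
  rw [hval, hNval]
  ext v
  simp only [InnerProductSpace.toDual_apply_apply, PiLp.inner_apply, RCLike.inner_apply, starRingEnd_apply,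
    star_trivial, Fin.sum_univ_two, ContinuousLinearMap.add_apply, ContinuousLinearMap.sub_apply, ContinuousLinearMap.smul_apply,
    ContinuousLinearMap.coe_smul', Pi.smul_apply, hπ0, hπ1, PiLp.proj_apply, smul_eq_mul]
  show v 0 * (pt (-c*(1+2*s^2)/Real.sqrt 2) (s*(1+2*c^2)/Real.sqrt 2)) 0
      + v 1 * (pt (-c*(1+2*s^2)/Real.sqrt 2) (s*(1+2*c^2)/Real.sqrt 2)) 1 = _
  have e0 : (pt (-c*(1+2*s^2)/Real.sqrt 2) (s*(1+2*c^2)/Real.sqrt 2)) 0 = -c*(1+2*s^2)/Real.sqrt 2 := rfl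
  have e1 : (pt (-c*(1+2*s^2)/Real.sqrt 2) (s*(1+2*c^2)/Real.sqrt 2)) 1 = s*(1+2*c^2)/Real.sqrt 2 := rfl
  rw [e0, e1]
  field_simp
  linear_combination (2*(s*v 1-c*v 0)) * h

def ff (θ : ℝ) : ℝ := -Real.cos θ * (1 + 2 * Real.sin θ ^ 2) / Real.sqrt 2
def gg (θ : ℝ) : ℝ := Real.sin θ * (1 + 2 * Real.cos θ ^ 2) / Real.sqrt 2

theorem grad_circle (θ : ℝ) : gradient w2 (pt (Real.cos θ) (Real.sin θ)) = pt (ff θ) (gg θ) :=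
  (hasGrad (Real.cos θ) (Real.sin θ) (Real.cos_sq_add_sin_sq θ)).gradient

theorem ff_deriv (θ : ℝ) :
    HasDerivAt ff (Real.sin θ * (3 - 6 * Real.cos θ ^ 2) / Real.sqrt 2) θ := by
  have h1 : HasDerivAt (fun θ => -Real.cos θ * (1 + 2 * Real.sin θ ^ 2))
      (Real.sin θ * (1 + 2 * Real.sin θ ^ 2) + (-Real.cos θ) * (2 * (2 * Real.sin θ * Real.cos θ))) θ := by
    have hc := (Real.hasDerivAt_cos θ).neg
    have hs : HasDerivAt (fun θ => 1 + 2 * Real.sin θ ^ 2) (2 * (2 * Real.sin θ * Real.cos θ)) θ := by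
      have := ((Real.hasDerivAt_sin θ).pow 2).const_mul (2:ℝ)
      simpa [mul_comm, mul_assoc, pow_one] using this.const_add (1:ℝ)
    have := hc.mul hs
    simp only [neg_neg] at this
    exact this
  have := h1.div_const (Real.sqrt 2)
  convert this using 1
  case e'_4 => rfl
  case e'_5 => rfl
  case e'_8 => rfl
  have h : Real.sin θ ^ 2 + Real.cos θ ^ 2 = 1 := Real.sin_sq_add_cos_sq θ
  field_simp
  linear_combination (-2*Real.sin θ) * h

theorem ff_cont : Continuous ff :=
  ((Real.continuous_cos.neg.mul
    (continuous_const.add (continuous_const.mul (Real.continuous_sin.pow 2))))).div_const _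

theorem gg_cont : Continuous gg :=
  ((Real.continuous_sin.mul
    (continuous_const.add (continuous_const.mul (Real.continuous_cos.pow 2))))).div_const _

theorem ff_smooth : ContDiff ℝ (⊤ : ℕ∞) ff := by
  apply ContDiff.div_const
  exact (Real.contDiff_cos.neg.mul
    (contDiff_const.add (contDiff_const.mul (Real.contDiff_sin.pow 2))))

theorem gg_smooth : ContDiff ℝ (⊤ : ℕ∞) gg := by
  apply ContDiff.div_const
  exact (Real.contDiff_sin.mul
    (contDiff_const.add (contDiff_const.mul (Real.contDiff_cos.pow 2))))

theorem ff_deriv_pos {x : ℝ} (hx : x ∈ Set.Ioo (π/4) (3*π/4)) :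
    0 < Real.sin x * (3 - 6 * Real.cos x ^ 2) / Real.sqrt 2 := by
  have hx1 : 0 < x := lt_trans (by positivity) hx.1
  have hx2 : x < π := lt_trans hx.2 (by nlinarith [Real.pi_pos])
  have hs : 0 < Real.sin x := Real.sin_pos_of_pos_of_lt_pi hx1 hx2
  have hc1 : Real.cos x < Real.cos (π/4) :=
    Real.cos_lt_cos_of_nonneg_of_le_pi (by positivity) (le_of_lt hx2) hx.1
  have hc2 : Real.cos (3*π/4) < Real.cos x :=
    Real.cos_lt_cos_of_nonneg_of_le_pi (by positivity) (by nlinarith [Real.pi_pos]) hx.2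
  rw [Real.cos_pi_div_four] at hc1
  have h34 : Real.cos (3*π/4) = -(Real.sqrt 2 / 2) := by
    rw [show (3*π/4 : ℝ) = π - π/4 by ring, Real.cos_pi_sub, Real.cos_pi_div_four]
  rw [h34] at hc2
  have hsq : Real.sqrt 2 * Real.sqrt 2 = 2 := Real.mul_self_sqrt (by norm_num)
  have h2 : (0:ℝ) < Real.sqrt 2 := by positivity
  apply div_pos _ h2
  apply mul_pos hs
  nlinarith [hc1, hc2, hsq]

theorem ff_mono : StrictMonoOn ff (Set.Icc (π / 4) (3 * π / 4)) := by
  have hcont : ContinuousOn ff (Set.Icc (π / 4) (3 * π / 4)) := ff_cont.continuousOn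
  apply strictMonoOn_of_deriv_pos (convex_Icc _ _) hcont
  intro x hx
  rw [interior_Icc] at hx
  rw [(ff_deriv x).deriv]
  exact ff_deriv_pos hx

theorem ff_left : ff (π/4) = -1 := by
  rw [ff, Real.cos_pi_div_four, Real.sin_pi_div_four]
  have hsq : Real.sqrt 2 * Real.sqrt 2 = 2 := Real.mul_self_sqrt (by norm_num)
  have h2 : Real.sqrt 2 ≠ 0 := by positivity
  field_simp
  nlinarith [hsq]

theorem ff_right : ff (3*π/4) = 1 := by
  have h34c : Real.cos (3*π/4) = -(Real.sqrt 2 / 2) := by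
    rw [show (3*π/4 : ℝ) = π - π/4 by ring, Real.cos_pi_sub, Real.cos_pi_div_four]
  have h34s : Real.sin (3*π/4) = Real.sqrt 2 / 2 := by
    rw [show (3*π/4 : ℝ) = π - π/4 by ring, Real.sin_pi_sub, Real.sin_pi_div_four]
  rw [ff, h34c, h34s]
  have hsq : Real.sqrt 2 * Real.sqrt 2 = 2 := Real.mul_self_sqrt (by norm_num)
  have h2 : Real.sqrt 2 ≠ 0 := by positivity
  field_simp
  nlinarith [hsq]

/-- On the interval, `sin θ ≥ |cos θ|`. -/
theorem sin_ge_abs_cos {θ : ℝ} (hθ : θ ∈ Set.Icc (π/4) (3*π/4)) :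
    |Real.cos θ| ≤ Real.sin θ := by
  have hpi := Real.pi_pos
  have hs : 0 ≤ Real.sin θ :=
    Real.sin_nonneg_of_nonneg_of_le_pi (by nlinarith [hθ.1]) (by nlinarith [hθ.2])
  have hc1 : Real.cos θ ≤ Real.cos (π/4) :=
    Real.cos_le_cos_of_nonneg_of_le_pi (by positivity) (by nlinarith [hθ.2]) hθ.1
  have hc2 : Real.cos (3*π/4) ≤ Real.cos θ :=
    Real.cos_le_cos_of_nonneg_of_le_pi (by nlinarith [hθ.1]) (by nlinarith) hθ.2
  rw [Real.cos_pi_div_four] at hc1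
  rw [show (3*π/4 : ℝ) = π - π/4 by ring, Real.cos_pi_sub, Real.cos_pi_div_four] at hc2
  have hsq : Real.sqrt 2 * Real.sqrt 2 = 2 := Real.mul_self_sqrt (by norm_num)
  have h1 : Real.sin θ ^ 2 + Real.cos θ ^ 2 = 1 := Real.sin_sq_add_cos_sq θ
  rw [abs_le]
  constructor <;> nlinarith [hc1, hc2, hsq, hs, h1]

/-- The key algebraic identities: `√2 (gg − ff) = (sin+cos)³`, `√2 (gg + ff) = (sin−cos)³`. -/
theorem gg_sub_ff (θ : ℝ) : gg θ - ff θ = (Real.sin θ + Real.cos θ)^3 / Real.sqrt 2 := by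
  have h1 : Real.sin θ ^ 2 + Real.cos θ ^ 2 = 1 := Real.sin_sq_add_cos_sq θ
  rw [gg, ff]
  have h2 : Real.sqrt 2 ≠ 0 := by positivity
  field_simp
  linear_combination (-Real.sin θ - Real.cos θ) * h1

theorem gg_add_ff (θ : ℝ) : gg θ + ff θ = (Real.sin θ - Real.cos θ)^3 / Real.sqrt 2 := by
  have h1 : Real.sin θ ^ 2 + Real.cos θ ^ 2 = 1 := Real.sin_sq_add_cos_sq θ
  rw [gg, ff]
  have h2 : Real.sqrt 2 ≠ 0 := by positivity
  field_simp
  linear_combination (Real.cos θ - Real.sin θ) * h1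

theorem abs_ff_le_gg {θ : ℝ} (h : |Real.cos θ| ≤ Real.sin θ) : |ff θ| ≤ gg θ := by
  have h2 : (0:ℝ) < Real.sqrt 2 := by positivity
  rw [abs_le] at h ⊢
  constructor
  · have := gg_add_ff θ
    nlinarith [this, pow_nonneg (by linarith : (0:ℝ) ≤ Real.sin θ - Real.cos θ) 3,
      div_nonneg (pow_nonneg (by linarith : (0:ℝ) ≤ Real.sin θ - Real.cos θ) 3) h2.le]
  · have := gg_sub_ff θ
    nlinarith [div_nonneg (pow_nonneg (by linarith : (0:ℝ) ≤ Real.sin θ + Real.cos θ) 3) h2.le]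

theorem gg_cond {θ : ℝ} (h : |ff θ| ≤ gg θ) : |Real.cos θ| ≤ Real.sin θ := by
  have h2 : (0:ℝ) < Real.sqrt 2 := by positivity
  rw [abs_le] at h
  have ha : 0 ≤ (Real.sin θ + Real.cos θ)^3 / Real.sqrt 2 := by
    rw [← gg_sub_ff]; linarith
  have hb : 0 ≤ (Real.sin θ - Real.cos θ)^3 / Real.sqrt 2 := by
    rw [← gg_add_ff]; linarith
  rw [le_div_iff₀ h2, zero_mul] at ha hb
  have ha' : 0 ≤ Real.sin θ + Real.cos θ := (Odd.pow_nonneg_iff (by decide)).1 ha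
  have hb' : 0 ≤ Real.sin θ - Real.cos θ := (Odd.pow_nonneg_iff (by decide)).1 hb
  rw [abs_le]
  constructor <;> linarith

theorem exists_theta (c s : ℝ) (h : c^2 + s^2 = 1) : ∃ θ, c = Real.cos θ ∧ s = Real.sin θ := by
  have hc : -1 ≤ c ∧ c ≤ 1 := by constructor <;> nlinarith
  rcases le_or_gt 0 s with hs | hs
  · refine ⟨Real.arccos c, (Real.cos_arccos hc.1 hc.2).symm, ?_⟩
    rw [Real.sin_arccos]
    rw [show 1 - c^2 = s^2 by nlinarith]
    rw [Real.sqrt_sq hs]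
  · refine ⟨-Real.arccos c, ?_, ?_⟩
    · rw [Real.cos_neg, Real.cos_arccos hc.1 hc.2]
    · rw [Real.sin_neg, Real.sin_arccos, show 1 - c^2 = s^2 by nlinarith,
        Real.sqrt_sq_eq_abs, abs_of_neg hs]
      ring

theorem pi_div_four_le_arccos {c : ℝ} (h : c ≤ Real.sqrt 2 / 2) : π/4 ≤ Real.arccos c := by
  rcases le_or_gt (π/4) (Real.arccos c) with h1 | h1
  · exact h1
  · exfalso
    have h2 : Real.sqrt 2 / 2 ≤ c := Real.arccos_le_pi_div_four.1 h1.le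
    have h3 : c = Real.sqrt 2 / 2 := le_antisymm h h2
    rw [h3, ← Real.cos_pi_div_four,
      Real.arccos_cos (by positivity) (by nlinarith [Real.pi_pos])] at h1
    exact lt_irrefl _ h1

theorem arccos_mem {c : ℝ} (h1 : -(Real.sqrt 2/2) ≤ c) (h2 : c ≤ Real.sqrt 2 / 2) :
    Real.arccos c ∈ Set.Icc (π/4) (3*π/4) := by
  refine ⟨pi_div_four_le_arccos h2, ?_⟩
  have := pi_div_four_le_arccos (c := -c) (by linarith)
  rw [Real.arccos_neg] at this
  linarith

theorem Ga1_eq_image : Ga1 = (fun θ => pt (ff θ) (gg θ)) '' Set.Icc (π/4) (3*π/4) := by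
  apply Set.Subset.antisymm
  · rintro p ⟨⟨x, hx, hgrad⟩, hcond⟩
    obtain ⟨θ, hc, hs⟩ := exists_theta (x 0) (x 1) (sq_norm x hx)
    have hxθ : x = pt (Real.cos θ) (Real.sin θ) := by
      rw [← pt_eta x, hc, hs]
    have hpθ : p = pt (ff θ) (gg θ) := by
      rw [← hgrad, hxθ, grad_circle]
    have hff : |ff θ| ≤ gg θ := by
      have h0 : p 0 = ff θ := by rw [hpθ]; rfl
      have h1 : p 1 = gg θ := by rw [hpθ]; rfl
      have hcond' : |p 0| ≤ p 1 := hcond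
      rwa [h0, h1] at hcond'
    have hcs : |Real.cos θ| ≤ Real.sin θ := gg_cond hff
    have habs : |Real.cos θ| ≤ Real.sqrt 2 / 2 := by
      have h1 : Real.sin θ ^ 2 + Real.cos θ ^ 2 = 1 := Real.sin_sq_add_cos_sq θ
      have hsq : Real.sqrt 2 * Real.sqrt 2 = 2 := Real.mul_self_sqrt (by norm_num)
      have h2 : (0:ℝ) < Real.sqrt 2 := by positivity
      have habs2 : |Real.cos θ|^2 ≤ 1/2 := by
        rw [sq_abs]
        nlinarith [abs_nonneg (Real.cos θ), sq_abs (Real.cos θ), hcs,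
          Real.sin_le_one θ, abs_nonneg (Real.cos θ)]
      nlinarith [abs_nonneg (Real.cos θ)]
    set θ' := Real.arccos (Real.cos θ) with hθ'
    have hmem : θ' ∈ Set.Icc (π/4) (3*π/4) := by
      apply arccos_mem
      · have := abs_le.1 habs; linarith [this.1]
      · have := abs_le.1 habs; linarith [(abs_le.1 habs).2]
    have hcos' : Real.cos θ' = Real.cos θ :=
      Real.cos_arccos (Real.neg_one_le_cos θ) (Real.cos_le_one θ)
    have hsin' : Real.sin θ' = Real.sin θ := by
      rw [hθ', Real.sin_arccos,
        show 1 - Real.cos θ^2 = Real.sin θ^2 by nlinarith [Real.sin_sq_add_cos_sq θ],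
        Real.sqrt_sq (le_trans (abs_nonneg _) hcs)]
    refine ⟨θ', hmem, ?_⟩
    show pt (ff θ') (gg θ') = p
    rw [hpθ]
    rw [show ff θ' = ff θ by rw [ff, ff, hcos', hsin'],
      show gg θ' = gg θ by rw [gg, gg, hcos', hsin']]
  · rintro p ⟨θ, hθ, rfl⟩
    refine ⟨⟨pt (Real.cos θ) (Real.sin θ), norm_pt _ _ (Real.cos_sq_add_sin_sq θ),
      grad_circle θ⟩, ?_⟩
    show |pt (ff θ) (gg θ) 0| ≤ pt (ff θ) (gg θ) 1
    rw [pt_zero, pt_one]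
    exact abs_ff_le_gg (sin_ge_abs_cos hθ)

theorem ff_image : ff '' Set.Icc (π/4) (3*π/4) = Set.Icc (-1:ℝ) 1 := by
  apply Set.Subset.antisymm
  · rintro t ⟨θ, hθ, rfl⟩
    have hpi := Real.pi_pos
    exact ⟨ff_left ▸ ff_mono.monotoneOn (Set.left_mem_Icc.2 (by nlinarith)) hθ hθ.1,
      ff_right ▸ ff_mono.monotoneOn hθ (Set.right_mem_Icc.2 (by nlinarith)) hθ.2⟩
  · have hpi := Real.pi_pos
    have := intermediate_value_Icc (by nlinarith : π/4 ≤ 3*π/4) ff_cont.continuousOn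
    rw [ff_left, ff_right] at this
    exact this

def invF : ℝ → ℝ := Function.invFunOn ff (Set.Icc (π/4) (3*π/4))

theorem exists_pre {t : ℝ} (ht : t ∈ Set.Icc (-1:ℝ) 1) :
    ∃ θ ∈ Set.Icc (π/4) (3*π/4), ff θ = t := by
  have := ff_image.symm ▸ ht
  obtain ⟨θ, hθ, hft⟩ := this
  exact ⟨θ, hθ, hft⟩

theorem invF_mem {t : ℝ} (ht : t ∈ Set.Icc (-1:ℝ) 1) :
    invF t ∈ Set.Icc (π/4) (3*π/4) := Function.invFunOn_mem (exists_pre ht)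

theorem ff_invF {t : ℝ} (ht : t ∈ Set.Icc (-1:ℝ) 1) : ff (invF t) = t :=
  Function.invFunOn_eq (exists_pre ht)

theorem invF_ff {θ : ℝ} (hθ : θ ∈ Set.Icc (π/4) (3*π/4)) : invF (ff θ) = θ :=
  ff_mono.injOn.leftInvOn_invFunOn hθ

def eqv : Set.Icc (π/4) (3*π/4) ≃ Set.Icc (-1:ℝ) 1 where
  toFun θ := ⟨ff θ.1, ff_image ▸ Set.mem_image_of_mem ff θ.2⟩
  invFun t := ⟨invF t.1, invF_mem t.2⟩
  left_inv θ := Subtype.ext (invF_ff θ.2)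
  right_inv t := Subtype.ext (ff_invF t.2)

theorem invF_contOn : ContinuousOn invF (Set.Icc (-1:ℝ) 1) := by
  have hc : Continuous (eqv : Set.Icc (π/4) (3*π/4) → Set.Icc (-1:ℝ) 1) :=
    Continuous.subtype_mk (ff_cont.comp continuous_subtype_val) _
  let h := hc.homeoOfEquivCompactToT2
  rw [continuousOn_iff_continuous_restrict]
  have : Set.domRestrict (Set.Icc (-1:ℝ) 1) invF = Subtype.val ∘ h.symm := rfl
  rw [this]
  exact continuous_subtype_val.comp h.symm.continuous

def φ₀ : ℝ → ℝ := fun t => gg (invF t)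

theorem φ₀_contOn : ContinuousOn φ₀ (Set.Icc (-1:ℝ) 1) :=
  gg_cont.comp_continuousOn invF_contOn

theorem graph_eq : Ga1 = {p : EuclideanSpace ℝ (Fin 2) |
    p 0 ∈ Set.Icc (-1 : ℝ) 1 ∧ p 1 = φ₀ (p 0)} := by
  rw [Ga1_eq_image]
  ext p
  constructor
  · rintro ⟨θ, hθ, rfl⟩
    have h0 : (fun θ => pt (ff θ) (gg θ)) θ 0 = ff θ := rfl
    have h1 : (fun θ => pt (ff θ) (gg θ)) θ 1 = gg θ := rfl
    refine ⟨?_, ?_⟩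
    · rw [h0, ← ff_image]; exact Set.mem_image_of_mem ff hθ
    · rw [h0, h1, φ₀, invF_ff hθ]
  · rintro ⟨h0, h1⟩
    refine ⟨invF (p 0), invF_mem h0, ?_⟩
    show pt (ff (invF (p 0))) (gg (invF (p 0))) = p
    rw [ff_invF h0, ← φ₀]
    rw [← h1, pt_eta]

theorem φ₀_smooth : ContDiffOn ℝ (⊤ : ℕ∞) φ₀ (Set.Ioo (-1:ℝ) 1) := by
  intro t ht
  have htIcc : t ∈ Set.Icc (-1:ℝ) 1 := Set.Ioo_subset_Icc_self ht
  set θ₀ := invF t with hθ₀def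
  have hθIcc : θ₀ ∈ Set.Icc (π/4) (3*π/4) := invF_mem htIcc
  have hfft : ff θ₀ = t := ff_invF htIcc
  have hθIoo : θ₀ ∈ Set.Ioo (π/4) (3*π/4) := by
    rcases lt_or_eq_of_le hθIcc.1 with h | h
    · rcases lt_or_eq_of_le hθIcc.2 with h2 | h2
      · exact ⟨h, h2⟩
      · exfalso; rw [h2] at hfft; rw [ff_right] at hfft; rw [← hfft] at ht
        exact lt_irrefl _ ht.2
    · exfalso; rw [← h] at hfft; rw [ff_left] at hfft; rw [← hfft] at ht
      exact lt_irrefl _ ht.1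
  have hd : Real.sin θ₀ * (3 - 6 * Real.cos θ₀ ^ 2) / Real.sqrt 2 ≠ 0 :=
    (ff_deriv_pos hθIoo).ne'
  have hf' := (ff_deriv θ₀).hasFDerivAt_equiv hd
  have hcd : ContDiffAt ℝ (⊤ : ℕ∞) ff θ₀ := ff_smooth.contDiffAt
  have hn : ((⊤ : ℕ∞) : WithTop ℕ∞) ≠ 0 := by simp
  have hsm : ContDiffAt ℝ (⊤ : ℕ∞) (hcd.localInverse hf' hn) (ff θ₀) := hcd.to_localInverse hf' hn
  set linv := hcd.localInverse hf' hn with hlinv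
  have hstrict := hcd.hasStrictFDerivAt' hf' hn
  have hlinv2 : linv = hstrict.localInverse ff _ θ₀ := rfl
  have hri : ∀ᶠ y in 𝓝 (ff θ₀), ff (linv y) = y := by
    rw [hlinv2]; exact hstrict.eventually_right_inverse
  have hcont : ContinuousAt linv (ff θ₀) := by
    rw [hlinv2]; exact hstrict.localInverse_continuousAt
  have happ : linv (ff θ₀) = θ₀ := by
    rw [hlinv2]; exact hstrict.localInverse_apply_image
  rw [hfft] at hri hcont hsm happ
  have hnb : ∀ᶠ y in 𝓝 t, linv y ∈ Set.Ioo (π/4) (3*π/4) := by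
    apply hcont.eventually_mem
    rw [happ]
    exact isOpen_Ioo.mem_nhds hθIoo
  have hIoo : ∀ᶠ y in 𝓝 t, y ∈ Set.Ioo (-1:ℝ) 1 := isOpen_Ioo.mem_nhds ht
  have heq : invF =ᶠ[𝓝 t] linv := by
    filter_upwards [hri, hnb, hIoo] with y h1 h2 h3
    have hyIcc : y ∈ Set.Icc (-1:ℝ) 1 := Set.Ioo_subset_Icc_self h3
    apply ff_mono.injOn (invF_mem hyIcc) (Set.Ioo_subset_Icc_self h2)
    rw [ff_invF hyIcc, h1]
  have hinvF : ContDiffAt ℝ (⊤ : ℕ∞) invF t := hsm.congr_of_eventuallyEq heq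
  have : ContDiffAt ℝ (⊤ : ℕ∞) φ₀ t := (gg_smooth.contDiffAt).comp t hinvF
  exact this.contDiffWithinAt

/-- Explicit formula for `∇w` on the unit circle; the first component is strictly increasing
in `θ` on `[π/4, 3π/4]` from `−1` to `1`, so `Γ₁` is the graph of a unique continuous function
`φ` on `[−1,1]`, smooth on `(−1,1)`. -/
theorem statement6 :
    (∀ θ : ℝ, gradient w2 (pt (Real.cos θ) (Real.sin θ)) =
      pt (-Real.cos θ * (1 + 2 * Real.sin θ ^ 2) / Real.sqrt 2)
         (Real.sin θ * (1 + 2 * Real.cos θ ^ 2) / Real.sqrt 2)) ∧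
    StrictMonoOn (fun θ : ℝ => -Real.cos θ * (1 + 2 * Real.sin θ ^ 2) / Real.sqrt 2)
      (Set.Icc (π / 4) (3 * π / 4)) ∧
    (-Real.cos (π / 4) * (1 + 2 * Real.sin (π / 4) ^ 2) / Real.sqrt 2 = -1) ∧
    (-Real.cos (3 * π / 4) * (1 + 2 * Real.sin (3 * π / 4) ^ 2) / Real.sqrt 2 = 1) ∧
    (∃ φ : ℝ → ℝ, ContinuousOn φ (Set.Icc (-1) 1) ∧
      Ga1 = {p : EuclideanSpace ℝ (Fin 2) | p 0 ∈ Set.Icc (-1 : ℝ) 1 ∧ p 1 = φ (p 0)} ∧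
      (∀ ψ : ℝ → ℝ, ContinuousOn ψ (Set.Icc (-1) 1) →
        Ga1 = {p : EuclideanSpace ℝ (Fin 2) | p 0 ∈ Set.Icc (-1 : ℝ) 1 ∧ p 1 = ψ (p 0)} →
        Set.EqOn ψ φ (Set.Icc (-1) 1)) ∧
      ContDiffOn ℝ (⊤ : ℕ∞) φ (Set.Ioo (-1) 1)) := by
  refine ⟨fun θ => grad_circle θ, ff_mono, ff_left, ff_right,
    φ₀, φ₀_contOn, graph_eq, ?_, φ₀_smooth⟩
  intro ψ _ hgr t ht
  have hmem : pt t (φ₀ t) ∈ Ga1 := by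
    rw [graph_eq]
    exact ⟨by rw [pt_zero]; exact ht, by rw [pt_zero, pt_one]⟩
  rw [hgr] at hmem
  have := hmem.2
  rw [pt_zero, pt_one] at this
  exact this.symm
end
end

section
/- There exist ε₀ > 0 and C > 0 such that for all ε ∈ (0, ε₀) one has |φ''(−1+ε) − √(2/3)·ε^{−1/2}| ≤ C, and φ'' is strictly decreasing on the interval (−1, −1+ε₀). -/
open Real Set Metric Filter
open scoped RealInnerProductSpace

noncomputable section

abbrev pr (i : Fin 2) : EuclideanSpace ℝ (Fin 2) →L[ℝ] ℝ := EuclideanSpace.proj i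

lemma grad_w2 (y : EuclideanSpace ℝ (Fin 2)) (h : (y 0)^2 + (y 1)^2 = 1) :
    HasGradientAt w2
      ((WithLp.equiv 2 (Fin 2 → ℝ)).symm
        ![-(y 0)*(1+2*(y 1)^2)/Real.sqrt 2, (y 1)*(1+2*(y 0)^2)/Real.sqrt 2]) y := by
  have h0 : HasFDerivAt (fun y : EuclideanSpace ℝ (Fin 2) => y 0) (pr 0) y := (pr 0).hasFDerivAt
  have h1 : HasFDerivAt (fun y : EuclideanSpace ℝ (Fin 2) => y 1) (pr 1) y := (pr 1).hasFDerivAt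
  have hN : HasFDerivAt (fun y : EuclideanSpace ℝ (Fin 2) => (y 1) * (y 1) - (y 0) * (y 0))
      ((y 1 • pr 1 + y 1 • pr 1) - (y 0 • pr 0 + y 0 • pr 0)) y :=
    (h1.mul h1).sub (h0.mul h0)
  have hQ : HasFDerivAt (fun y : EuclideanSpace ℝ (Fin 2) => 2 * ((y 0) * (y 0) + (y 1) * (y 1)))
      ((2:ℝ) • ((y 0 • pr 0 + y 0 • pr 0) + (y 1 • pr 1 + y 1 • pr 1))) y :=
    ((h0.mul h0).add (h1.mul h1)).const_mul 2
  have hval : 2 * ((y 0) * (y 0) + (y 1) * (y 1)) = 2 := by nlinarith [h]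
  have hD : HasFDerivAt
      (fun y : EuclideanSpace ℝ (Fin 2) => Real.sqrt (2 * ((y 0) * (y 0) + (y 1) * (y 1))))
      ((1 / (2 * Real.sqrt 2)) • ((2:ℝ) • ((y 0 • pr 0 + y 0 • pr 0)
        + (y 1 • pr 1 + y 1 • pr 1)))) y := by
    have := hQ.sqrt (by rw [hval]; norm_num)
    rwa [hval] at this
  have hinv : HasFDerivAt
      (fun y : EuclideanSpace ℝ (Fin 2) =>
        (Real.sqrt (2 * ((y 0) * (y 0) + (y 1) * (y 1))))⁻¹)
      ((-((Real.sqrt 2)^2)⁻¹) • ((1 / (2 * Real.sqrt 2)) • ((2:ℝ) • ((y 0 • pr 0 + y 0 • pr 0)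
        + (y 1 • pr 1 + y 1 • pr 1))))) y := by
    have hne : Real.sqrt (2 * ((y 0) * (y 0) + (y 1) * (y 1))) ≠ 0 := by
      rw [hval]; positivity
    have := (hasDerivAt_inv hne).comp_hasFDerivAt y hD
    rw [hval] at this
    exact this
  have hw : HasFDerivAt w2
      (((y 1) * (y 1) - (y 0) * (y 0)) •
          ((-((Real.sqrt 2)^2)⁻¹) • ((1 / (2 * Real.sqrt 2)) • ((2:ℝ) •
            ((y 0 • pr 0 + y 0 • pr 0) + (y 1 • pr 1 + y 1 • pr 1)))))
        + (Real.sqrt 2)⁻¹ • ((y 1 • pr 1 + y 1 • pr 1) - (y 0 • pr 0 + y 0 • pr 0))) y := by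
    have hw2eq : w2 = fun y : EuclideanSpace ℝ (Fin 2) =>
        ((y 1) * (y 1) - (y 0) * (y 0)) *
          (Real.sqrt (2 * ((y 0) * (y 0) + (y 1) * (y 1))))⁻¹ := by
      funext z; simp only [w2, pow_two, div_eq_mul_inv]
    rw [hw2eq]
    have := hN.mul hinv
    rw [hval] at this
    exact this
  rw [hasGradientAt_iff_hasFDerivAt]
  have hs2 : Real.sqrt 2 ^ 2 = 2 := Real.sq_sqrt (by norm_num)
  have hs2ne : Real.sqrt 2 ≠ 0 := by positivity
  have key : (InnerProductSpace.toDual ℝ (EuclideanSpace ℝ (Fin 2)))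
      ((WithLp.equiv 2 (Fin 2 → ℝ)).symm
        ![-(y 0)*(1+2*(y 1)^2)/Real.sqrt 2, (y 1)*(1+2*(y 0)^2)/Real.sqrt 2])
      = (((y 1) * (y 1) - (y 0) * (y 0)) •
          ((-((Real.sqrt 2)^2)⁻¹) • ((1 / (2 * Real.sqrt 2)) • ((2:ℝ) •
            ((y 0 • pr 0 + y 0 • pr 0) + (y 1 • pr 1 + y 1 • pr 1)))))
        + (Real.sqrt 2)⁻¹ • ((y 1 • pr 1 + y 1 • pr 1) - (y 0 • pr 0 + y 0 • pr 0))) := by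
    apply ContinuousLinearMap.ext
    intro z
    simp only [InnerProductSpace.toDual_apply_apply, PiLp.inner_apply, RCLike.inner_apply,
      conj_trivial, Fin.sum_univ_two, WithLp.equiv_symm_apply, PiLp.toLp_apply, Matrix.cons_val_zero,
      Matrix.cons_val_one, Matrix.head_cons, ContinuousLinearMap.add_apply,
      ContinuousLinearMap.smul_apply, ContinuousLinearMap.sub_apply, PiLp.proj_apply,
      smul_eq_mul]
    have e0 : -(y 0)*(1+2*(y 1)^2)/Real.sqrt 2 =
        ((y 1) * (y 1) - (y 0) * (y 0)) * ((-((Real.sqrt 2)^2)⁻¹) * ((1 / (2 * Real.sqrt 2)) *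
          (2 * (y 0 + y 0)))) + (Real.sqrt 2)⁻¹ * (-(y 0 + y 0)) := by
      rw [hs2]
      field_simp
      linear_combination (-2*(y 0)) * h
    have e1 : (y 1)*(1+2*(y 0)^2)/Real.sqrt 2 =
        ((y 1) * (y 1) - (y 0) * (y 0)) * ((-((Real.sqrt 2)^2)⁻¹) * ((1 / (2 * Real.sqrt 2)) *
          (2 * (y 1 + y 1)))) + (Real.sqrt 2)⁻¹ * (y 1 + y 1) := by
      rw [hs2]
      field_simp
      linear_combination (2*(y 1)) * h
    linear_combination (z 0) * e0 + (z 1) * e1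
  rw [key]
  exact hw

/-- the graph point membership -/
lemma graph_val (φ : ℝ → ℝ)
    (hφgraph : Ga1 = {p : EuclideanSpace ℝ (Fin 2) | p 0 ∈ Set.Icc (-1 : ℝ) 1 ∧ p 1 = φ (p 0)}) :
    ∀ x ∈ Set.Icc (-1:ℝ) 1, φ ((x^3 - 3*x)/2) = Real.sqrt (2 - x^2) * (1 + x^2) / 2 := by
  intro x hx
  obtain ⟨hx1, hx2⟩ := hx
  have h2x : (0:ℝ) ≤ 2 - x^2 := by nlinarith
  have hs : Real.sqrt (2 - x^2) ^ 2 = 2 - x^2 := Real.sq_sqrt h2x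
  have hsnn : 0 ≤ Real.sqrt (2 - x^2) := Real.sqrt_nonneg _
  have hs2 : Real.sqrt 2 ^ 2 = 2 := Real.sq_sqrt (by norm_num)
  have hs2pos : 0 < Real.sqrt 2 := by positivity
  set y : EuclideanSpace ℝ (Fin 2) :=
    (WithLp.equiv 2 (Fin 2 → ℝ)).symm ![x / Real.sqrt 2, Real.sqrt (2 - x^2) / Real.sqrt 2] with hy
  have hy0 : y 0 = x / Real.sqrt 2 := rfl
  have hy1 : y 1 = Real.sqrt (2 - x^2) / Real.sqrt 2 := rfl
  have hysum : (y 0)^2 + (y 1)^2 = 1 := by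
    rw [hy0, hy1]
    rw [div_pow, div_pow, hs, hs2]
    ring
  have hnorm : ‖y‖ = 1 := by
    rw [EuclideanSpace.norm_eq]
    rw [Fin.sum_univ_two]
    have : ‖y 0‖ ^ 2 + ‖y 1‖ ^ 2 = 1 := by
      rw [Real.norm_eq_abs, Real.norm_eq_abs, sq_abs, sq_abs]; exact hysum
    rw [this, Real.sqrt_one]
  have hgrad := (grad_w2 y hysum).gradient
  set p : EuclideanSpace ℝ (Fin 2) :=
    (WithLp.equiv 2 (Fin 2 → ℝ)).symm
      ![-(y 0)*(1+2*(y 1)^2)/Real.sqrt 2, (y 1)*(1+2*(y 0)^2)/Real.sqrt 2] with hp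
  have hp0 : p 0 = (x^3 - 3*x)/2 := by
    show -(y 0)*(1+2*(y 1)^2)/Real.sqrt 2 = (x^3 - 3*x)/2
    rw [hy0, hy1, div_pow, hs, hs2]
    field_simp
    linear_combination (3*x - x^3) * hs2
  have hp1 : p 1 = Real.sqrt (2 - x^2) * (1 + x^2) / 2 := by
    show (y 1)*(1+2*(y 0)^2)/Real.sqrt 2 = Real.sqrt (2 - x^2) * (1 + x^2) / 2
    rw [hy0, hy1, div_pow, hs2]
    field_simp
    linear_combination (-Real.sqrt (2 - x^2)) * hs2
  have hmem : p ∈ Ga1 := by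
    constructor
    · exact ⟨y, hnorm, hgrad⟩
    · show |p 0| ≤ p 1
      rw [hp0, hp1]
      rw [abs_le]
      have hAB : (Real.sqrt (2-x^2)*(1+x^2) - x*(3-x^2)) * (Real.sqrt (2-x^2)*(1+x^2) + x*(3-x^2))
          = 2*(1-x^2)^3 := by
        linear_combination ((1+x^2)^2) * hs
      have hcube : (0:ℝ) ≤ 2*(1-x^2)^3 := by
        have : (0:ℝ) ≤ 1 - x^2 := by nlinarith
        positivity
      have hsum : (0:ℝ) ≤ Real.sqrt (2-x^2) * (1+x^2) :=
        mul_nonneg hsnn (by positivity)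
      constructor
      · nlinarith [hAB, hcube, hsum, sq_nonneg (Real.sqrt (2-x^2)*(1+x^2) - x*(3-x^2))]
      · nlinarith [hAB, hcube, hsum, sq_nonneg (Real.sqrt (2-x^2)*(1+x^2) + x*(3-x^2))]
  rw [hφgraph] at hmem
  obtain ⟨_, hval⟩ := hmem
  rw [hp0] at hval
  rw [← hval, hp1]

private lemma hFd (x : ℝ) : HasDerivAt (fun t : ℝ => (t^3 - 3*t)/2) ((3*x^2-3)/2) x := by
  have h := ((hasDerivAt_pow 3 x).sub ((hasDerivAt_id x).const_mul 3)).div_const 2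
  simpa using h.congr_deriv (by push_cast; ring)

private lemma Fmem {x : ℝ} (hx : x ∈ Set.Ioo (-1:ℝ) 1) :
    (x^3 - 3*x)/2 ∈ Set.Ioo (-1:ℝ) 1 := by
  obtain ⟨h1, h2⟩ := hx
  constructor
  · nlinarith [mul_pos (mul_pos (by linarith : (0:ℝ) < 1 - x) (by linarith : (0:ℝ) < 1 - x))
      (by linarith : (0:ℝ) < x + 2)]
  · nlinarith [mul_pos (mul_pos (by linarith : (0:ℝ) < 1 + x) (by linarith : (0:ℝ) < 1 + x))
      (by linarith : (0:ℝ) < 2 - x)]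

private lemma deriv1_eq (φ : ℝ → ℝ)
    (hgv : ∀ x ∈ Set.Icc (-1:ℝ) 1, φ ((x^3-3*x)/2) = Real.sqrt (2-x^2)*(1+x^2)/2)
    (hφs : ContDiffOn ℝ (⊤ : ℕ∞) φ (Set.Ioo (-1) 1)) :
    ∀ x ∈ Set.Ioo (-1:ℝ) 1, deriv φ ((x^3-3*x)/2) = -x / Real.sqrt (2-x^2) := by
  intro x hx
  have hu := Fmem hx
  have h2x : (0:ℝ) < 2 - x^2 := by nlinarith [hx.1, hx.2]
  have hs : Real.sqrt (2-x^2) ^ 2 = 2 - x^2 := Real.sq_sqrt h2x.le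
  have hspos : 0 < Real.sqrt (2-x^2) := Real.sqrt_pos.mpr h2x
  have hφd : DifferentiableAt ℝ φ ((x^3-3*x)/2) :=
    (hφs.differentiableOn (by simp)).differentiableAt (isOpen_Ioo.mem_nhds hu)
  have hchain : HasDerivAt (fun t => φ ((t^3-3*t)/2))
      (deriv φ ((x^3-3*x)/2) * ((3*x^2-3)/2)) x :=
    (hφd.hasDerivAt).comp x (hFd x)
  have hEq : (fun t => φ ((t^3-3*t)/2)) =ᶠ[nhds x]
      (fun t => Real.sqrt (2-t^2)*(1+t^2)/2) :=
    eventually_of_mem (isOpen_Ioo.mem_nhds hx)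
      (fun z hz => hgv z (Set.Ioo_subset_Icc_self hz))
  have hinner : HasDerivAt (fun t : ℝ => 2 - t^2) (-(2*x)) x := by
    exact ((hasDerivAt_const x (2:ℝ)).sub (hasDerivAt_pow 2 x)).congr_deriv (by norm_num)
  have hsq : HasDerivAt (fun t : ℝ => Real.sqrt (2-t^2))
      (-(2*x) / (2*Real.sqrt (2-x^2))) x := hinner.sqrt h2x.ne'
  have hone : HasDerivAt (fun t : ℝ => 1 + t^2) (2*x) x := by
    exact ((hasDerivAt_const x (1:ℝ)).add (hasDerivAt_pow 2 x)).congr_deriv (by norm_num)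
  have hGd : HasDerivAt (fun t => Real.sqrt (2-t^2)*(1+t^2)/2)
      (((-(2*x) / (2*Real.sqrt (2-x^2))) * (1+x^2)
        + Real.sqrt (2-x^2) * (2*x))/2) x := (hsq.mul hone).div_const 2
  have huniq := (hchain.congr_of_eventuallyEq hEq.symm).unique hGd
  have h3 : (3*x^2-3)/2 ≠ 0 := by
    intro hcon
    have : x^2 = 1 := by linarith [(div_eq_zero_iff.mp hcon)]
    nlinarith [hx.1, hx.2]
  have hval := (eq_div_iff h3).mpr huniq
  rw [hval, div_eq_div_iff h3 (ne_of_gt hspos)]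
  field_simp
  linear_combination (2*x) * hs

private lemma deriv2_eq (φ : ℝ → ℝ)
    (hgv : ∀ x ∈ Set.Icc (-1:ℝ) 1, φ ((x^3-3*x)/2) = Real.sqrt (2-x^2)*(1+x^2)/2)
    (hφs : ContDiffOn ℝ (⊤ : ℕ∞) φ (Set.Ioo (-1) 1)) :
    ∀ x ∈ Set.Ioo (-1:ℝ) 1, iteratedDeriv 2 φ ((x^3-3*x)/2)
      = 4 / (3*(1-x^2)*(Real.sqrt (2-x^2))^3) := by
  have hd1 := deriv1_eq φ hgv hφs
  have hψ : ContDiffOn ℝ (⊤ : ℕ∞) (deriv φ) (Set.Ioo (-1:ℝ) 1) :=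
    hφs.deriv_of_isOpen isOpen_Ioo (by simp)
  intro x hx
  have hu := Fmem hx
  have h2x : (0:ℝ) < 2 - x^2 := by nlinarith [hx.1, hx.2]
  have hs : Real.sqrt (2-x^2) ^ 2 = 2 - x^2 := Real.sq_sqrt h2x.le
  have hspos : 0 < Real.sqrt (2-x^2) := Real.sqrt_pos.mpr h2x
  have hψd : DifferentiableAt ℝ (deriv φ) ((x^3-3*x)/2) :=
    (hψ.differentiableOn (by simp)).differentiableAt (isOpen_Ioo.mem_nhds hu)
  have hchain : HasDerivAt (fun t => deriv φ ((t^3-3*t)/2))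
      (deriv (deriv φ) ((x^3-3*x)/2) * ((3*x^2-3)/2)) x := by
    have := (hψd.hasDerivAt).comp x (hFd x); exact this
  have hEq : (fun t => deriv φ ((t^3-3*t)/2)) =ᶠ[nhds x]
      (fun t => -t / Real.sqrt (2-t^2)) :=
    eventually_of_mem (isOpen_Ioo.mem_nhds hx) (fun z hz => hd1 z hz)
  have hinner : HasDerivAt (fun t : ℝ => 2 - t^2) (-(2*x)) x := by
    exact ((hasDerivAt_const x (2:ℝ)).sub (hasDerivAt_pow 2 x)).congr_deriv (by norm_num)
  have hsq : HasDerivAt (fun t : ℝ => Real.sqrt (2-t^2))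
      (-(2*x) / (2*Real.sqrt (2-x^2))) x := hinner.sqrt h2x.ne'
  have hH1d : HasDerivAt (fun t => -t / Real.sqrt (2-t^2))
      (((-1) * Real.sqrt (2-x^2) - (-x) * (-(2*x) / (2*Real.sqrt (2-x^2))))
        / (Real.sqrt (2-x^2))^2) x :=
    ((hasDerivAt_id x).neg).div hsq (ne_of_gt hspos)
  have huniq := (hchain.congr_of_eventuallyEq hEq.symm).unique hH1d
  have h3 : (3*x^2-3)/2 ≠ 0 := by
    intro hcon
    have : x^2 = 1 := by linarith [(div_eq_zero_iff.mp hcon)]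
    nlinarith [hx.1, hx.2]
  have hden : 3*(1-x^2)*(Real.sqrt (2-x^2))^3 ≠ 0 := by
    have h1x : (0:ℝ) < 1 - x^2 := by nlinarith [hx.1, hx.2]
    positivity
  have hval := (eq_div_iff h3).mpr huniq
  rw [iteratedDeriv_succ, iteratedDeriv_one, hval,
    div_eq_div_iff h3 hden]
  field_simp
  linear_combination (2*x^2 - 2) * hs

private lemma G2bound : ∃ M > (0:ℝ), ∀ x ∈ Set.Icc (1/2:ℝ) 1,
    |4/(3*(1+x)*(Real.sqrt (2-x^2))^3) - 2/Real.sqrt (3*x+6)| ≤ M * (1-x) := by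
  set G2 : ℝ → ℝ := fun x => 4/(3*(1+x)*(Real.sqrt (2-x^2))^3) - 2/Real.sqrt (3*x+6) with hG2
  set U : Set ℝ := Set.Ioo (0:ℝ) (6/5) with hU
  have hUopen : IsOpen U := isOpen_Ioo
  have hsub : Set.Icc (1/2:ℝ) 1 ⊆ U := fun z hz => ⟨by linarith [hz.1], by linarith [hz.2]⟩
  have h2x : ∀ x ∈ U, (2 - x^2) ≠ 0 := by
    intro x hx; have := hx.1; have := hx.2; nlinarith
  have h2xpos : ∀ x ∈ U, (0:ℝ) < 2 - x^2 := by
    intro x hx; have := hx.1; have := hx.2; nlinarith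
  have h36 : ∀ x ∈ U, (3*x+6) ≠ 0 := by
    intro x hx; have := hx.1; nlinarith
  have hCD : ContDiffOn ℝ 1 G2 U := by
    apply ContDiffOn.sub
    · apply ContDiffOn.div contDiffOn_const
      · apply ContDiffOn.mul
        · exact (contDiff_const.mul (contDiff_const.add contDiff_id)).contDiffOn
        · exact (ContDiffOn.sqrt (by fun_prop) h2x).pow 3
      · intro x hx
        have := h2xpos x hx
        have h1 : (0:ℝ) < 1 + x := by have := hx.1; linarith
        have hsp : 0 < Real.sqrt (2-x^2) := Real.sqrt_pos.mpr this
        positivity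
    · apply ContDiffOn.div contDiffOn_const
      · exact ContDiffOn.sqrt (by fun_prop) h36
      · intro x hx
        have : (0:ℝ) < 3*x+6 := by have := hx.1; linarith
        have := Real.sqrt_pos.mpr this
        positivity
  have hdercont : ContinuousOn (deriv G2) U :=
    hCD.continuousOn_deriv_of_isOpen hUopen le_rfl
  obtain ⟨M0, hM0⟩ := (isCompact_Icc (a := (1/2:ℝ)) (b := 1)).exists_bound_of_continuousOn
    (hdercont.mono hsub)
  have hdiffat : ∀ z ∈ Set.Icc (1/2:ℝ) 1, DifferentiableAt ℝ G2 z := fun z hz =>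
    ((hCD.differentiableOn (by simp)).differentiableAt (hUopen.mem_nhds (hsub hz)))
  have hG21 : G2 1 = 0 := by
    have e1 : Real.sqrt (2 - (1:ℝ)^2) = 1 := by norm_num
    have e2 : Real.sqrt (3*(1:ℝ)+6) = 3 := by
      rw [show (3*(1:ℝ)+6) = 3^2 by norm_num]
      exact Real.sqrt_sq (by norm_num)
    simp only [hG2, e1, e2]
    norm_num
  refine ⟨max M0 1, by positivity, ?_⟩
  intro x hx
  have key := Convex.norm_image_sub_le_of_norm_deriv_le (C := max M0 (1:ℝ)) hdiffat
    (fun z hz => (hM0 z hz).trans (le_max_left _ _)) (convex_Icc _ _)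
    (Set.right_mem_Icc.mpr (by norm_num)) hx
  rw [hG21, sub_zero] at key
  have hn : ‖x - (1:ℝ)‖ = 1-x := by
    rw [Real.norm_eq_abs, abs_of_nonpos (by linarith [hx.2])]; ring
  rw [hn] at key
  exact key


/-- Near the left cusp, `φ''(−1+ε) = √(2/3)·ε^{−1/2} + O(1)`, and `φ''` is strictly
decreasing near `−1`. -/
theorem statement8 (φ : ℝ → ℝ)
    (hφc : ContinuousOn φ (Set.Icc (-1) 1))
    (hφgraph : Ga1 = {p : EuclideanSpace ℝ (Fin 2) | p 0 ∈ Set.Icc (-1 : ℝ) 1 ∧ p 1 = φ (p 0)})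
    (hφs : ContDiffOn ℝ (⊤ : ℕ∞) φ (Set.Ioo (-1) 1)) :
    ∃ ε₀ > (0 : ℝ), ∃ C > (0 : ℝ),
      (∀ ε ∈ Set.Ioo (0 : ℝ) ε₀,
        |iteratedDeriv 2 φ (-1 + ε) - Real.sqrt (2 / 3) * ε ^ (-(1 : ℝ) / 2)| ≤ C) ∧
      StrictAntiOn (iteratedDeriv 2 φ) (Set.Ioo (-1) (-1 + ε₀)) := by
  obtain ⟨M, hMpos, hM⟩ := G2bound
  have hgv := graph_val φ hφgraph
  have hd2 := deriv2_eq φ hgv hφs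
  have hIVT : ∀ u ∈ Set.Ioo (-1:ℝ) (-(11/16) : ℝ),
      ∃ x ∈ Set.Ioo (1/2:ℝ) 1, (x^3-3*x)/2 = u := by
    intro u hu
    have hcont : ContinuousOn (fun t : ℝ => (t^3-3*t)/2) (Set.Icc (1/2) 1) := by fun_prop
    have himg := intermediate_value_Ioo' (by norm_num : (1/2:ℝ) ≤ 1) hcont
    have hmem : u ∈ Set.Ioo (((1:ℝ)^3-3*1)/2) (((1/2:ℝ)^3-3*(1/2))/2) := by
      constructor
      · norm_num; linarith [hu.1]
      · norm_num; linarith [hu.2]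
    obtain ⟨x, hxI, hxeq⟩ := himg hmem
    exact ⟨x, hxI, hxeq⟩
  refine ⟨5/16, by norm_num, M, hMpos, ?_, ?_⟩
  · intro ε hε
    obtain ⟨x, hxI, hFx⟩ := hIVT (-1+ε) ⟨by linarith [hε.1], by linarith [hε.2]⟩
    have hx11 : x ∈ Set.Ioo (-1:ℝ) 1 := ⟨by linarith [hxI.1], hxI.2⟩
    have h1mx : (0:ℝ) < 1 - x := by linarith [hxI.2]
    have h1px : (0:ℝ) < 1 + x := by linarith [hxI.1]
    have h2x : (0:ℝ) < 2 - x^2 := by nlinarith [hxI.1, hxI.2]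
    have hs : Real.sqrt (2-x^2) ^ 2 = 2 - x^2 := Real.sq_sqrt h2x.le
    have hspos : 0 < Real.sqrt (2-x^2) := Real.sqrt_pos.mpr h2x
    have hit : iteratedDeriv 2 φ (-1+ε) = 4/(3*(1-x^2)*(Real.sqrt (2-x^2))^3) := by
      rw [← hFx]; exact hd2 x hx11
    have hεx : ε = (1-x)^2*(x+2)/2 := by linear_combination -hFx
    have h36pos : (0:ℝ) < 3*x+6 := by linarith [hxI.1]
    have hsq36 : Real.sqrt (3*x+6) ^ 2 = 3*x+6 := Real.sq_sqrt h36pos.le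
    have hsq36pos : 0 < Real.sqrt (3*x+6) := Real.sqrt_pos.mpr h36pos
    have hεsqpos : 0 < Real.sqrt ε := Real.sqrt_pos.mpr hε.1
    have hT : Real.sqrt (2/3) * ε ^ (-(1:ℝ)/2) = 2/((1-x)*Real.sqrt (3*x+6)) := by
      have hrp : ε ^ (-(1:ℝ)/2) = (Real.sqrt ε)⁻¹ := by
        rw [show (-(1:ℝ)/2) = -(1/2 : ℝ) by norm_num, Real.rpow_neg hε.1.le,
          ← Real.sqrt_eq_rpow]
      rw [hrp]
      have hA0 : (0:ℝ) ≤ Real.sqrt (2/3) * (Real.sqrt ε)⁻¹ := by positivity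
      have hB0 : (0:ℝ) ≤ 2/((1-x)*Real.sqrt (3*x+6)) := by positivity
      have hA2 : (Real.sqrt (2/3) * (Real.sqrt ε)⁻¹)^2
          = (2/((1-x)*Real.sqrt (3*x+6)))^2 := by
        rw [mul_pow, inv_pow, Real.sq_sqrt (by norm_num : (0:ℝ) ≤ 2/3),
          Real.sq_sqrt hε.1.le, div_pow, mul_pow, hsq36, hεx]
        have hx2ne : x + (2:ℝ) ≠ 0 := by linarith [hxI.1]
        field_simp
        ring
      calc Real.sqrt (2/3) * (Real.sqrt ε)⁻¹
          = Real.sqrt ((Real.sqrt (2/3) * (Real.sqrt ε)⁻¹)^2) := (Real.sqrt_sq hA0).symm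
        _ = Real.sqrt ((2/((1-x)*Real.sqrt (3*x+6)))^2) := by rw [hA2]
        _ = 2/((1-x)*Real.sqrt (3*x+6)) := Real.sqrt_sq hB0
    have hsplit : 4/(3*(1-x^2)*(Real.sqrt (2-x^2))^3) - 2/((1-x)*Real.sqrt (3*x+6))
        = (4/(3*(1+x)*(Real.sqrt (2-x^2))^3) - 2/Real.sqrt (3*x+6))/(1-x) := by
      have h1mx2 : (0:ℝ) < 1 - x^2 := by nlinarith
      have hA : (0:ℝ) < 3*(1-x^2)*(Real.sqrt (2-x^2))^3 := by positivity
      have hB : (0:ℝ) < (1-x)*Real.sqrt (3*x+6) := by positivity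
      have hC : (0:ℝ) < 3*(1+x)*(Real.sqrt (2-x^2))^3 := by positivity
      rw [div_sub_div _ _ hA.ne' hB.ne', div_sub_div _ _ hC.ne' hsq36pos.ne', div_div]
      rw [div_eq_div_iff (by positivity) (by positivity)]
      ring
    rw [hit, hT, hsplit, abs_div, abs_of_pos h1mx, div_le_iff₀ h1mx]
    exact hM x ⟨hxI.1.le, hxI.2.le⟩
  · have he : (-1 + (5:ℝ)/16) = -(11/16) := by norm_num
    rw [he]
    intro u₁ h1 u₂ h2 hlt
    obtain ⟨x₁, hxI1, hFx1⟩ := hIVT u₁ h1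
    obtain ⟨x₂, hxI2, hFx2⟩ := hIVT u₂ h2
    have hanti : StrictAntiOn (fun t : ℝ => (t^3-3*t)/2) (Set.Icc (1/2:ℝ) 1) := by
      apply strictAntiOn_of_deriv_neg (convex_Icc _ _) (by fun_prop)
      intro t ht
      rw [interior_Icc] at ht
      rw [(hFd t).deriv]
      nlinarith [ht.1, ht.2]
    have hmem1 : x₁ ∈ Set.Icc (1/2:ℝ) 1 := ⟨hxI1.1.le, hxI1.2.le⟩
    have hmem2 : x₂ ∈ Set.Icc (1/2:ℝ) 1 := ⟨hxI2.1.le, hxI2.2.le⟩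
    have hx21 : x₂ < x₁ := by
      rcases lt_trichotomy x₁ x₂ with h|h|h
      · exfalso
        have := hanti hmem1 hmem2 h
        simp only at this
        rw [hFx1, hFx2] at this
        linarith
      · exfalso; rw [h, hFx2] at hFx1; linarith
      · exact h
    have hx111 : x₁ ∈ Set.Ioo (-1:ℝ) 1 := ⟨by linarith [hxI1.1], hxI1.2⟩
    have hx211 : x₂ ∈ Set.Ioo (-1:ℝ) 1 := ⟨by linarith [hxI2.1], hxI2.2⟩
    have hit1 : iteratedDeriv 2 φ u₁ = 4/(3*(1-x₁^2)*(Real.sqrt (2-x₁^2))^3) := by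
      rw [← hFx1]; exact hd2 x₁ hx111
    have hit2 : iteratedDeriv 2 φ u₂ = 4/(3*(1-x₂^2)*(Real.sqrt (2-x₂^2))^3) := by
      rw [← hFx2]; exact hd2 x₂ hx211
    rw [hit1, hit2]
    have h2x1 : (0:ℝ) < 2 - x₁^2 := by nlinarith [hxI1.1, hxI1.2]
    have h2x2 : (0:ℝ) < 2 - x₂^2 := by nlinarith [hxI2.1, hxI2.2]
    have hs1pos : 0 < Real.sqrt (2-x₁^2) := Real.sqrt_pos.mpr h2x1
    have hs2pos : 0 < Real.sqrt (2-x₂^2) := Real.sqrt_pos.mpr h2x2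
    have hd1pos : (0:ℝ) < 3*(1-x₁^2)*(Real.sqrt (2-x₁^2))^3 := by
      have : (0:ℝ) < 1 - x₁^2 := by nlinarith [hxI1.1, hxI1.2]
      positivity
    have hdlt : 3*(1-x₁^2)*(Real.sqrt (2-x₁^2))^3
        < 3*(1-x₂^2)*(Real.sqrt (2-x₂^2))^3 := by
      have hx12sum : (0:ℝ) < x₁ + x₂ := by linarith [hxI1.1, hxI2.1]
      have hprod : (0:ℝ) < (x₁ - x₂) * (x₁ + x₂) := mul_pos (sub_pos.mpr hx21) hx12sum
      have hsle : Real.sqrt (2-x₁^2) ≤ Real.sqrt (2-x₂^2) :=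
        Real.sqrt_le_sqrt (by nlinarith [hprod])
      have hcube : (Real.sqrt (2-x₁^2))^3 ≤ (Real.sqrt (2-x₂^2))^3 :=
        pow_le_pow_left₀ hs1pos.le hsle 3
      have h12 : 3*(1-x₁^2) < 3*(1-x₂^2) := by nlinarith [hxI1.1, hxI2.1]
      calc 3*(1-x₁^2)*(Real.sqrt (2-x₁^2))^3
          ≤ 3*(1-x₁^2)*(Real.sqrt (2-x₂^2))^3 := by
            apply mul_le_mul_of_nonneg_left hcube
            nlinarith [hxI1.1, hxI1.2]
        _ < 3*(1-x₂^2)*(Real.sqrt (2-x₂^2))^3 := by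
            apply mul_lt_mul_of_pos_right h12
            positivity
    exact div_lt_div_of_pos_left (by norm_num) hd1pos hdlt
end
end

section
/- Let N ⊂ ℝⁿ be a nonempty bounded set, c > 0, and F : ℝⁿ → ℝ a C¹ function such that F(z) ≥ F(x) + ∇F(x)·(z−x) + c|z−x|² for all x, z ∈ N. Define H₀(y) = sup_{x ∈ N} [ F(x) + ∇F(x)·(y−x) + c|y−x|² ] for y ∈ ℝⁿ. Then H₀ is finite everywhere, H₀ = F on N, and the function y ↦ H₀(y) − c|y|² is convex; in particular H₀ is a (strongly) convex function on ℝⁿ. -/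
open Real Set Metric
open scoped RealInnerProductSpace

/-! Subtracting `c|y|²` from the tangent paraboloid `F x + ⟪∇F x, y - x⟫ + c|y - x|²` leaves a
function that is affine in `y`, so `H₀ - c|·|²` is a pointwise supremum of affine functions and
hence convex. The supremum is finite because the paraboloid depends continuously on `x`, which
ranges over the compact closure of `N`. On `N` the hypothesis bounds every paraboloid by `F y`,
and the paraboloid at `x = y` attains it. -/

lemma Bornology.IsBounded.bddAbove_image_of_continuous {X : Type*} [PseudoMetricSpace X]
    [ProperSpace X] {s : Set X} (hs : Bornology.IsBounded s) {f : X → ℝ} (hf : Continuous f) :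
    BddAbove (f '' s) :=
  (hs.isCompact_closure.bddAbove_image hf.continuousOn).mono (image_mono subset_closure)

lemma csSup_image_sub_const {α : Type*} {s : Set α} {f : α → ℝ} (hs : s.Nonempty)
    (hf : BddAbove (f '' s)) (a : ℝ) :
    sSup (f '' s) - a = sSup ((fun x => f x - a) '' s) := by
  rw [sub_eq_add_neg, ← OrderIso.addRight_apply,
    (OrderIso.addRight (-a)).map_csSup' (hs.image f) hf, image_image]
  simp only [OrderIso.addRight_apply, sub_eq_add_neg]

lemma convexOn_csSup_image {E ι : Type*} [AddCommGroup E] [Module ℝ E] {s : Set E} {t : Set ι}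
    {φ : ι → E → ℝ} (ht : t.Nonempty) (hφ : ∀ i ∈ t, ConvexOn ℝ s (φ i))
    (hbdd : ∀ y ∈ s, BddAbove ((φ · y) '' t)) :
    ConvexOn ℝ s (fun y => sSup ((φ · y) '' t)) := by
  refine ⟨(hφ _ ht.some_mem).1, fun y₁ hy₁ y₂ hy₂ a b ha hb hab => ?_⟩
  refine csSup_le (ht.image _) ?_
  rintro _ ⟨i, hi, rfl⟩
  calc φ i (a • y₁ + b • y₂) ≤ a • φ i y₁ + b • φ i y₂ := (hφ i hi).2 hy₁ hy₂ ha hb hab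
    _ ≤ a • sSup ((φ · y₁) '' t) + b • sSup ((φ · y₂) '' t) := by
      gcongr
      · exact le_csSup (hbdd y₁ hy₁) ⟨i, hi, rfl⟩
      · exact le_csSup (hbdd y₂ hy₂) ⟨i, hi, rfl⟩

lemma convexOn_add_inner_sub_add_mul_norm_sub_sq_sub {E : Type*} [NormedAddCommGroup E]
    [InnerProductSpace ℝ E] (a c : ℝ) (v x : E) :
    ConvexOn ℝ univ (fun y => a + ⟪v, y - x⟫ + c * ‖y - x‖ ^ 2 - c * ‖y‖ ^ 2) := by
  have affine : (fun y => a + ⟪v, y - x⟫ + c * ‖y - x‖ ^ 2 - c * ‖y‖ ^ 2) =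
      fun y => innerₛₗ ℝ (v - (2 * c) • x) y + (a - ⟪v, x⟫ + c * ‖x‖ ^ 2) := by
    funext y
    rw [innerₛₗ_apply_apply, norm_sub_sq_real, inner_sub_left, inner_sub_right,
      real_inner_smul_left, real_inner_comm x y]
    ring
  rw [affine]
  exact ((innerₛₗ ℝ (v - (2 * c) • x)).convexOn convex_univ).add_const _

theorem statement13_general {n : ℕ} (N : Set (EuclideanSpace ℝ (Fin n))) (hne : N.Nonempty)
    (hbd : Bornology.IsBounded N) (c : ℝ)
    (F : EuclideanSpace ℝ (Fin n) → ℝ) (hF : ContDiff ℝ 1 F)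
    (hsep : ∀ x ∈ N, ∀ z ∈ N,
      F x + ⟪gradient F x, z - x⟫ + c * ‖z - x‖ ^ 2 ≤ F z)
    (H₀ : EuclideanSpace ℝ (Fin n) → ℝ)
    (hH₀ : ∀ y, H₀ y =
      sSup ((fun x => F x + ⟪gradient F x, y - x⟫ + c * ‖y - x‖ ^ 2) '' N)) :
    (∀ y : EuclideanSpace ℝ (Fin n),
      BddAbove ((fun x => F x + ⟪gradient F x, y - x⟫ + c * ‖y - x‖ ^ 2) '' N)) ∧
    (∀ y ∈ N, H₀ y = F y) ∧
    ConvexOn ℝ Set.univ (fun y => H₀ y - c * ‖y‖ ^ 2) := by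
  have hgrad : Continuous (gradient F) :=
    (InnerProductSpace.toDual ℝ _).symm.continuous.comp (hF.continuous_fderiv one_ne_zero)
  have bdd : ∀ y : EuclideanSpace ℝ (Fin n),
      BddAbove ((fun x => F x + ⟪gradient F x, y - x⟫ + c * ‖y - x‖ ^ 2) '' N) := fun y =>
    hbd.bddAbove_image_of_continuous (by fun_prop)
  refine ⟨bdd, fun y hy => ?_, ?_⟩
  · rw [hH₀ y]
    refine le_antisymm (csSup_le (hne.image _) ?_) (le_csSup_of_le (bdd y) ⟨y, hy, rfl⟩ (by simp))
    rintro _ ⟨x, hx, rfl⟩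
    exact hsep x hx y hy
  · simp_rw [hH₀, csSup_image_sub_const hne (bdd _)]
    exact convexOn_csSup_image hne
      (fun x _ => convexOn_add_inner_sub_add_mul_norm_sub_sq_sub _ _ _ _)
      (fun y _ => hbd.bddAbove_image_of_continuous (by fun_prop))

/-- If `F` is `C¹` and lifts quadratically (with constant `c`) from its tangent planes at points
of a nonempty bounded set `N`, then `H₀(y) = sup_{x ∈ N} [F(x) + ∇F(x)·(y−x) + c|y−x|²]` is
finite everywhere, agrees with `F` on `N`, and `H₀(y) − c|y|²` is convex (so `H₀` is strongly
convex). -/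
theorem statement13 {n : ℕ} (N : Set (EuclideanSpace ℝ (Fin n))) (hne : N.Nonempty)
    (hbd : Bornology.IsBounded N) (c : ℝ) (hc : 0 < c)
    (F : EuclideanSpace ℝ (Fin n) → ℝ) (hF : ContDiff ℝ 1 F)
    (hsep : ∀ x ∈ N, ∀ z ∈ N,
      F x + ⟪gradient F x, z - x⟫ + c * ‖z - x‖ ^ 2 ≤ F z)
    (H₀ : EuclideanSpace ℝ (Fin n) → ℝ)
    (hH₀ : ∀ y, H₀ y =
      sSup ((fun x => F x + ⟪gradient F x, y - x⟫ + c * ‖y - x‖ ^ 2) '' N)) :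
    (∀ y : EuclideanSpace ℝ (Fin n),
      BddAbove ((fun x => F x + ⟪gradient F x, y - x⟫ + c * ‖y - x‖ ^ 2) '' N)) ∧
    (∀ y ∈ N, H₀ y = F y) ∧
    ConvexOn ℝ Set.univ (fun y => H₀ y - c * ‖y‖ ^ 2) :=
  statement13_general N hne hbd c F hF hsep H₀ hH₀
end

section
/- Let a ≤ x₀ ≤ b and let g : [a,b] → ℝ be continuous with g > 0. For x ∈ [a,b], x ≠ x₀, set s(x) = (∫_{x₀}^{x} g(t)(x−t) dt) / (g(x₀)(x−x₀)²), and set s(x₀) = 1/2. Then s is continuous on [a,b] (in particular s(x) → 1/2 as x → x₀). Moreover, if g is monotone nondecreasing then s is monotone nondecreasing on [a,b], and if g is monotone nonincreasing then s is monotone nonincreasing on [a,b]. -/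
/-!
Substituting `t = x₀ + (x - x₀) u` gives
`∫_{x₀}^{x} g(t)(x - t) dt = (x - x₀)² ∫₀¹ g(x₀ + (x - x₀) u)(1 - u) du`,
so `s(x) = g(x₀)⁻¹ ∫₀¹ g(x₀ + (x - x₀) u)(1 - u) du` on `[a, b]`, including at `x = x₀`.
The right-hand side is a parametric integral over a fixed interval, hence continuous in `x`;
and for `u ∈ [0, 1]` the point `x₀ + (x - x₀) u` is monotone in `x`, so the integral inherits
the monotonicity of `g`. To work with a globally continuous function, `g` is first extended
from `[a, b]` to `ℝ` by `Set.IccExtend`.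
-/

open Set

noncomputable section

/-- `(∫_{x₀}^{x} G(t)(x - t) dt) / (x - x₀)²`, written over `[0, 1]` so that it is also meaningful
at `x = x₀`. -/
def rescaledIntegral (G : ℝ → ℝ) (x₀ x : ℝ) : ℝ :=
  ∫ u in (0 : ℝ)..1, G (x₀ + (x - x₀) * u) * (1 - u)

variable {G : ℝ → ℝ} {x₀ : ℝ}

theorem integral_mul_sub_eq_sq_mul_rescaledIntegral (G : ℝ → ℝ) (x₀ x : ℝ) :
    ∫ t in x₀..x, G t * (x - t) = (x - x₀) ^ 2 * rescaledIntegral G x₀ x := by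
  have h := intervalIntegral.smul_integral_comp_add_mul (a := 0) (b := 1)
    (fun t => G t * (x - t)) (x - x₀) x₀
  simp only [mul_zero, add_zero, mul_one, add_sub_cancel, smul_eq_mul] at h
  rw [← h, rescaledIntegral, sq, mul_assoc]
  simp only [← intervalIntegral.integral_const_mul]
  congr 1
  funext u
  ring

theorem rescaledIntegral_self (G : ℝ → ℝ) (x₀ : ℝ) : rescaledIntegral G x₀ x₀ = G x₀ / 2 := by
  simp only [rescaledIntegral, sub_self, zero_mul, add_zero, intervalIntegral.integral_const_mul]
  rw [intervalIntegral.integral_sub intervalIntegrable_const intervalIntegral.intervalIntegrable_id]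
  norm_num
  ring

theorem rescaledIntegral_neg (G : ℝ → ℝ) (x₀ x : ℝ) :
    rescaledIntegral (-G) x₀ x = -rescaledIntegral G x₀ x := by
  simp only [rescaledIntegral, Pi.neg_apply, neg_mul, intervalIntegral.integral_neg]

theorem Continuous.rescaledIntegral (hG : Continuous G) (x₀ : ℝ) :
    Continuous (rescaledIntegral G x₀) :=
  intervalIntegral.continuous_parametric_intervalIntegral_of_continuous' (by fun_prop) 0 1

theorem Monotone.rescaledIntegral (hGc : Continuous G) (hG : Monotone G) (x₀ : ℝ) :
    Monotone (rescaledIntegral G x₀) := by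
  intro x y hxy
  refine intervalIntegral.integral_mono_on zero_le_one ((by fun_prop : Continuous _).intervalIntegrable _ _)
    ((by fun_prop : Continuous _).intervalIntegrable _ _) ?_
  intro u ⟨hu₀, hu₁⟩
  have hpoint : x₀ + (x - x₀) * u ≤ x₀ + (y - x₀) * u := by nlinarith
  exact mul_le_mul_of_nonneg_right (hG hpoint) (by linarith)

theorem Antitone.rescaledIntegral (hGc : Continuous G) (hG : Antitone G) (x₀ : ℝ) :
    Antitone (rescaledIntegral G x₀) := by
  intro x y hxy
  have h := Monotone.rescaledIntegral hGc.neg hG.neg x₀ hxy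
  simp only [rescaledIntegral_neg] at h
  linarith

theorem eqOn_rescaledIntegral_div {a b : ℝ} {g s : ℝ → ℝ} (hx₀ : x₀ ∈ Icc a b)
    (hGg : EqOn G g (Icc a b)) (hg₀ : g x₀ ≠ 0)
    (hs : ∀ x, s x = if x = x₀ then 1 / 2 else
      (∫ t in x₀..x, g t * (x - t)) / (g x₀ * (x - x₀) ^ 2)) :
    EqOn s (fun x => rescaledIntegral G x₀ x / g x₀) (Icc a b) := by
  intro x hx
  rw [hs]
  split_ifs with hxx
  · dsimp only
    rw [hxx, rescaledIntegral_self, hGg hx₀]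
    field_simp
  · have hgG : ∫ t in x₀..x, g t * (x - t) = ∫ t in x₀..x, G t * (x - t) :=
      intervalIntegral.integral_congr fun t ht => by rw [hGg (uIcc_subset_Icc hx₀ hx ht)]
    have hx : x - x₀ ≠ 0 := sub_ne_zero.mpr hxx
    rw [hgG, integral_mul_sub_eq_sq_mul_rescaledIntegral]
    field_simp

end

/-- Properties of the weighted average `s(x) = (∫_{x₀}^{x} g(t)(x−t) dt)/(g(x₀)(x−x₀)²)`
(with `s(x₀) = 1/2`): it is continuous on `[a,b]`, and it inherits monotonicity
(or antitonicity) from `g`. -/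
theorem statement19 (a b x₀ : ℝ) (ha : a ≤ x₀) (hb : x₀ ≤ b)
    (g : ℝ → ℝ) (hg : ContinuousOn g (Set.Icc a b))
    (hgpos : ∀ t ∈ Set.Icc a b, 0 < g t)
    (s : ℝ → ℝ)
    (hs : ∀ x, s x = if x = x₀ then 1 / 2 else
      (∫ t in x₀..x, g t * (x - t)) / (g x₀ * (x - x₀) ^ 2)) :
    ContinuousOn s (Set.Icc a b) ∧
    (MonotoneOn g (Set.Icc a b) → MonotoneOn s (Set.Icc a b)) ∧
    (AntitoneOn g (Set.Icc a b) → AntitoneOn s (Set.Icc a b)) := by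
  have hab : a ≤ b := ha.trans hb
  have hx₀ : x₀ ∈ Icc a b := ⟨ha, hb⟩
  have hg₀ : 0 < g x₀ := hgpos x₀ hx₀
  set G := IccExtend hab ((Icc a b).domRestrict g)
  have hGc : Continuous G := hg.domRestrict.Icc_extend'
  have hsG := eqOn_rescaledIntegral_div hx₀ (fun x hx => IccExtend_of_mem hab ((Icc a b).domRestrict g) hx) hg₀.ne' hs
  refine ⟨((hGc.rescaledIntegral x₀).div_const _).continuousOn.congr hsG, fun hm => ?_, fun hm => ?_⟩
  · have hGm : Monotone G := (monotoneOn_iff_monotone.mp hm).IccExtend hab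
    exact (((hGm.rescaledIntegral hGc x₀).div_const hg₀.le).monotoneOn _).congr hsG.symm
  · have hGm : Antitone G := (antitoneOn_iff_antitone.mp hm).comp_monotone (monotone_projIcc hab)
    exact (((monotone_div_right_of_nonneg hg₀.le).comp_antitone
      (hGm.rescaledIntegral hGc x₀)).antitoneOn _).congr hsG.symm
end
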